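/- Let f : M → M be a C^1 diffeomorphism of a Riemannian manifold preserving a one-dimensional C^1 foliation. Suppose there exist measures m_x on the leaf through each x, and constants K ≥ 1 and λ > 1, such that for all x and n ≥ 0 we have K^{-1} λ^{-n} m_{f^n(x)}(I) ≤ f^n_* m_x(I) ≤ K λ^{-n} m_{f^n(x)}(I) for all measurable leaf sets I, and such that each m_x has density with respect to leafwise arc length bounded in [K^{-1}, K]. Then for every x, lim_{n→∞} (1/n) log ‖Df^n(x)|_{E}‖ = log λ, where E is the tangent line to the foliation. -/

import Mathlib

open MeasureTheory Filter ENNReal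

/-- Abstract model of a one-dimensional `C¹` invariant foliation: each leaf is
parametrized by arc length by `ℝ`, with the point of interest at `0`; `F x n : ℝ → ℝ` is
the leafwise representative of `f^n` along the leaf through `x` (so `F x n 0 = 0`
corresponds to `f^n x`, and `‖Df^n(x)|_E‖ = |deriv (F x n) 0|`); `m x` is a measure on the
leaf through `x` with density w.r.t. arc length (Lebesgue) pinched in `[K⁻¹, K]`.  If the
pushforwards satisfy `K⁻¹ λ^{-n} m_{f^n x} ≤ f^n_* m_x ≤ K λ^{-n} m_{f^n x}`, then the
Lyapunov exponent along the foliation is `log λ` at every point. -/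
theorem stmt7 {M : Type*} (f : M → M)
    (F : M → ℕ → ℝ → ℝ)
    (hF0 : ∀ x n, F x n 0 = 0)
    (hFdiff : ∀ x n, ContDiff ℝ 1 (F x n))
    (hFbij : ∀ x n, Function.Bijective (F x n))
    (ρ : M → ℝ → ℝ≥0∞) (hρmeas : ∀ x, Measurable (ρ x))
    (m : M → Measure ℝ) (hm : ∀ x, m x = volume.withDensity (ρ x))
    (K : ℝ≥0∞) (hK : 1 ≤ K) (hK' : K ≠ ∞)
    (hρ : ∀ x t, K⁻¹ ≤ ρ x t ∧ ρ x t ≤ K)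
    (lam : ℝ) (hlam : 1 < lam)
    (hpush : ∀ (x : M) (n : ℕ) (I : Set ℝ), MeasurableSet I →
      K⁻¹ * (ENNReal.ofReal (lam ^ n))⁻¹ * m (f^[n] x) I ≤ Measure.map (F x n) (m x) I ∧
      Measure.map (F x n) (m x) I ≤ K * (ENNReal.ofReal (lam ^ n))⁻¹ * m (f^[n] x) I) :
    ∀ x : M, Tendsto (fun n : ℕ => Real.log |deriv (F x n) 0| / n) atTop
      (nhds (Real.log lam)) := by
  intro x
  set Kr : ℝ := K.toReal with hKr
  have hK0 : K ≠ 0 := (zero_lt_one.trans_le hK).ne'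
  have hKr1 : 1 ≤ Kr := by
    rw [hKr, ← ENNReal.toReal_one]
    exact ENNReal.toReal_mono hK' hK
  have hKr0 : 0 < Kr := lt_of_lt_of_le zero_lt_one hKr1
  have hlam0 : 0 < lam := lt_trans zero_lt_one hlam
  have hKK : K * K⁻¹ = 1 := ENNReal.mul_inv_cancel hK0 hK'
  -- measure comparison with volume
  have hA : ∀ (y : M) (J : Set ℝ), MeasurableSet J →
      K⁻¹ * volume J ≤ m y J ∧ m y J ≤ K * volume J := by
    intro y J hJ
    rw [hm y, withDensity_apply _ hJ]
    constructor
    · calc K⁻¹ * volume J = ∫⁻ _ in J, K⁻¹ := (setLIntegral_const J K⁻¹).symm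
        _ ≤ ∫⁻ t in J, ρ y t := lintegral_mono fun t => (hρ y t).1
    · calc ∫⁻ t in J, ρ y t ≤ ∫⁻ _ in J, K := lintegral_mono fun t => (hρ y t).2
        _ = K * volume J := setLIntegral_const J K
  -- the main geometric estimate
  have main : ∀ (n : ℕ) (t : ℝ), 0 < t →
      lam ^ n * t ≤ Kr ^ 3 * |F x n t| ∧ |F x n t| ≤ Kr ^ 3 * (lam ^ n * t) := by
    intro n t ht
    set g : ℝ → ℝ := F x n with hg
    have hgc : Continuous g := (hFdiff x n).continuous
    have hgm : Measurable g := hgc.measurable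
    have hpre : g ⁻¹' Set.uIcc (g 0) (g t) = Set.uIcc 0 t := by
      rcases hgc.strictMono_of_inj (hFbij x n).1 with h | h
      · ext a; simp [Set.mem_uIcc, h.le_iff_le]
      · ext a; simp only [Set.mem_preimage, Set.mem_uIcc, h.le_iff_ge]; tauto
    set I : Set ℝ := Set.uIcc (g 0) (g t) with hI
    have hImeas : MeasurableSet I := measurableSet_uIcc
    have hmap : Measure.map g (m x) I = m x (Set.uIcc 0 t) := by
      rw [Measure.map_apply hgm hImeas, hpre]
    have hv1 : volume (Set.uIcc 0 t) = ENNReal.ofReal t := by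
      rw [Real.volume_interval]; congr 1; rw [sub_zero, abs_of_pos ht]
    have hv2 : volume I = ENNReal.ofReal |g t| := by
      rw [hI, Real.volume_interval, show g 0 = 0 from hF0 x n, sub_zero]
    have hx1 := hA x (Set.uIcc 0 t) measurableSet_uIcc
    have hx2 := hA (f^[n] x) I hImeas
    have hp := hpush x n I hImeas
    have hL0 : ENNReal.ofReal (lam ^ n) ≠ 0 := by
      simp [ENNReal.ofReal_eq_zero, not_le, pow_pos hlam0 n]
    have hLL : ENNReal.ofReal (lam ^ n) * (ENNReal.ofReal (lam ^ n))⁻¹ = 1 :=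
      ENNReal.mul_inv_cancel hL0 ENNReal.ofReal_ne_top
    set L : ℝ≥0∞ := (ENNReal.ofReal (lam ^ n))⁻¹ with hLdef
    -- ENNReal upper/lower estimates
    have h1 : ENNReal.ofReal (lam ^ n) * ENNReal.ofReal t ≤ K ^ 3 * ENNReal.ofReal |g t| := by
      have u1 : ENNReal.ofReal t ≤ K * m x (Set.uIcc 0 t) := by
        calc ENNReal.ofReal t = K * (K⁻¹ * volume (Set.uIcc 0 t)) := by
              rw [← mul_assoc, hKK, one_mul, hv1]
          _ ≤ K * m x (Set.uIcc 0 t) := mul_le_mul_right hx1.1 K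
      have u2 : m x (Set.uIcc 0 t) ≤ K * L * m (f^[n] x) I := hmap ▸ hp.2
      have u3 : m (f^[n] x) I ≤ K * ENNReal.ofReal |g t| := hv2 ▸ hx2.2
      have u : ENNReal.ofReal t ≤ K * (K * L * (K * ENNReal.ofReal |g t|)) :=
        u1.trans (mul_le_mul_right (u2.trans (mul_le_mul_right u3 _)) K)
      calc ENNReal.ofReal (lam ^ n) * ENNReal.ofReal t
          ≤ ENNReal.ofReal (lam ^ n) * (K * (K * L * (K * ENNReal.ofReal |g t|))) :=
            mul_le_mul_right u _
        _ = (ENNReal.ofReal (lam ^ n) * L) * (K ^ 3 * ENNReal.ofReal |g t|) := by ring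
        _ = K ^ 3 * ENNReal.ofReal |g t| := by rw [hLL, one_mul]
    have h2 : ENNReal.ofReal |g t| ≤ K ^ 3 * (ENNReal.ofReal (lam ^ n) * ENNReal.ofReal t) := by
      have l1 : ENNReal.ofReal |g t| ≤ K * m (f^[n] x) I := by
        calc ENNReal.ofReal |g t| = K * (K⁻¹ * volume I) := by
              rw [← mul_assoc, hKK, one_mul, hv2]
          _ ≤ K * m (f^[n] x) I := mul_le_mul_right hx2.1 K
      have l2 : m (f^[n] x) I ≤ K * ENNReal.ofReal (lam ^ n) * m x (Set.uIcc 0 t) := by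
        have := hp.1
        rw [hmap] at this
        calc m (f^[n] x) I
            = (K * ENNReal.ofReal (lam ^ n)) * (K⁻¹ * L * m (f^[n] x) I) := by
              rw [show (K * ENNReal.ofReal (lam ^ n)) * (K⁻¹ * L * m (f^[n] x) I)
                  = (K * K⁻¹) * (ENNReal.ofReal (lam ^ n) * L) * m (f^[n] x) I by ring,
                hKK, hLL, one_mul, one_mul]
          _ ≤ (K * ENNReal.ofReal (lam ^ n)) * m x (Set.uIcc 0 t) := mul_le_mul_right this _
          _ = K * ENNReal.ofReal (lam ^ n) * m x (Set.uIcc 0 t) := rfl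
      have l3 : m x (Set.uIcc 0 t) ≤ K * ENNReal.ofReal t := hv1 ▸ hx1.2
      calc ENNReal.ofReal |g t|
          ≤ K * (K * ENNReal.ofReal (lam ^ n) * (K * ENNReal.ofReal t)) :=
            l1.trans (mul_le_mul_right (l2.trans (mul_le_mul_right l3 _)) K)
        _ = K ^ 3 * (ENNReal.ofReal (lam ^ n) * ENNReal.ofReal t) := by ring
    -- convert to real inequalities
    have hKof : K = ENNReal.ofReal Kr := (ENNReal.ofReal_toReal hK').symm
    have hK3 : K ^ 3 = ENNReal.ofReal (Kr ^ 3) := by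
      rw [hKof, ← ENNReal.ofReal_pow hKr0.le]
    constructor
    · have := h1
      rw [hK3, ← ENNReal.ofReal_mul (pow_pos hlam0 n).le,
        ← ENNReal.ofReal_mul (pow_pos hKr0 3).le] at this
      exact (ENNReal.ofReal_le_ofReal_iff (by positivity)).mp this
    · have := h2
      rw [hK3, ← ENNReal.ofReal_mul (pow_pos hlam0 n).le,
        ← ENNReal.ofReal_mul (pow_pos hKr0 3).le] at this
      exact (ENNReal.ofReal_le_ofReal_iff (by positivity)).mp this
  -- derivative bounds
  have hder : ∀ n : ℕ, lam ^ n / Kr ^ 3 ≤ |deriv (F x n) 0| ∧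
      |deriv (F x n) 0| ≤ Kr ^ 3 * lam ^ n := by
    intro n
    have hd : HasDerivAt (F x n) (deriv (F x n) 0) 0 :=
      ((hFdiff x n).differentiable one_ne_zero 0).hasDerivAt
    have hslope : Tendsto (fun t => |F x n t / t|) (nhdsWithin 0 (Set.Ioi 0))
        (nhds |deriv (F x n) 0|) := by
      have h1 : Tendsto (slope (F x n) 0) (nhdsWithin 0 {(0:ℝ)}ᶜ) (nhds (deriv (F x n) 0)) :=
        hasDerivAt_iff_tendsto_slope.mp hd
      have h2 : Tendsto (slope (F x n) 0) (nhdsWithin 0 (Set.Ioi 0))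
          (nhds (deriv (F x n) 0)) :=
        h1.mono_left (nhdsWithin_mono 0 fun y hy => ne_of_gt hy)
      have h3 := (continuous_abs.tendsto _).comp h2
      refine h3.congr fun t => ?_
      simp [slope_def_field, hF0, div_eq_inv_mul]
    constructor
    · refine ge_of_tendsto hslope ?_
      filter_upwards [self_mem_nhdsWithin] with t (ht : 0 < t)
      have h := (main n t ht).1
      rw [abs_div, abs_of_pos ht, div_le_div_iff₀ (by positivity) ht]
      nlinarith [abs_nonneg (F x n t)]
    · refine le_of_tendsto hslope ?_
      filter_upwards [self_mem_nhdsWithin] with t (ht : 0 < t)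
      have h := (main n t ht).2
      rw [abs_div, abs_of_pos ht, div_le_iff₀ ht]
      nlinarith
  -- squeeze
  set C : ℝ := 3 * Real.log Kr with hC
  have hC0 : 0 ≤ C := by
    have := Real.log_nonneg hKr1
    positivity
  have hlog : ∀ n : ℕ, (n : ℝ) * Real.log lam - C ≤ Real.log |deriv (F x n) 0| ∧
      Real.log |deriv (F x n) 0| ≤ (n : ℝ) * Real.log lam + C := by
    intro n
    have hpos : 0 < lam ^ n / Kr ^ 3 := by positivity
    have h1 := (hder n).1
    have h2 := (hder n).2
    constructor
    · have e : (n : ℝ) * Real.log lam - C = Real.log (lam ^ n / Kr ^ 3) := by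
        rw [Real.log_div (by positivity) (by positivity), Real.log_pow, Real.log_pow, hC]
        push_cast; ring
      rw [e]
      exact Real.log_le_log hpos h1
    · have e : Real.log (Kr ^ 3 * lam ^ n) = (n : ℝ) * Real.log lam + C := by
        rw [Real.log_mul (by positivity) (by positivity), Real.log_pow, Real.log_pow, hC]
        push_cast; ring
      rw [← e]
      exact Real.log_le_log (lt_of_lt_of_le hpos h1) h2
  have hlo : Tendsto (fun n : ℕ => Real.log lam - C / n) atTop (nhds (Real.log lam)) := by
    simpa using tendsto_const_nhds.sub (tendsto_const_div_atTop_nhds_zero_nat C)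
  have hhi : Tendsto (fun n : ℕ => Real.log lam + C / n) atTop (nhds (Real.log lam)) := by
    simpa using tendsto_const_nhds.add (tendsto_const_div_atTop_nhds_zero_nat C)
  refine tendsto_of_tendsto_of_tendsto_of_le_of_le' hlo hhi ?_ ?_
  · filter_upwards [eventually_ge_atTop 1] with n hn
    have hn0 : (0:ℝ) < n := by exact_mod_cast hn
    have h := (hlog n).1
    have e : Real.log lam - C / n = ((n : ℝ) * Real.log lam - C) / n := by
      field_simp
    rw [e]
    gcongr
  · filter_upwards [eventually_ge_atTop 1] with n hn
    have hn0 : (0:ℝ) < n := by exact_mod_cast hn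
    have h := (hlog n).2
    have e : Real.log lam + C / n = ((n : ℝ) * Real.log lam + C) / n := by
      field_simp
    rw [e]
    gcongr
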